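/- arXiv:2506.00793 — 2 statements merged into one kernel-verified Lean document; each statement's English description precedes it below -/
import Mathlib

section
/- Let n be a positive integer and H an n×n lower unitriangular matrix with entries in ℤ[q,q⁻¹]. Then there exist lower unitriangular matrices P and Q with entries in ℤ[q,q⁻¹] such that H = P·Q, all off-diagonal entries of P lie in q·ℤ[q], and all entries of Q are bar-invariant. -/
open LaurentPolynomial

/-- The bar involution on `ℤ[q,q⁻¹]`, sending `q ↦ q⁻¹`. -/
noncomputable def bar : LaurentPolynomial ℤ → LaurentPolynomial ℤ :=
  LaurentPolynomial.invert

/-- `f ∈ q·ℤ[q]`: all coefficients in non-positive degrees vanish. -/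
def InQZq (f : LaurentPolynomial ℤ) : Prop := ∀ n : ℤ, n ≤ 0 → f.coeff n = 0

/-- `f` is bar-invariant. -/
def BarInv (f : LaurentPolynomial ℤ) : Prop := bar f = f

/-- A square matrix is lower unitriangular. -/
def LowerUni {n : ℕ} {R : Type*} [One R] [Zero R] (A : Matrix (Fin n) (Fin n) R) : Prop :=
  (∀ i, A i i = 1) ∧ ∀ i j : Fin n, i < j → A i j = 0

/-!
Every Laurent polynomial splits as `f = (f - barPart f) + barPart f` with `f - barPart f ∈ q·ℤ[q]`
and `barPart f` bar-invariant: keep the coefficients in degrees `≤ 0`, mirror them to positive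
degrees, and count the constant term once. Comparing entries of `H = P * Q` below the diagonal,
`H i j = P i j + Q i j + ∑_{j < k < i} P i k * Q k j`, so splitting
`H i j - ∑_{j < k < i} P i k * Q k j` in this way determines `P i j` and `Q i j` by recursion
on `i - j`.
-/

open Finset

noncomputable def nonposPart (f : LaurentPolynomial ℤ) : LaurentPolynomial ℤ :=
  AddMonoidAlgebra.ofCoeff (Finsupp.filter (· ≤ 0) f.coeff)

lemma coeff_nonposPart (f : LaurentPolynomial ℤ) (m : ℤ) :
    (nonposPart f).coeff m = if m ≤ 0 then f.coeff m else 0 :=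
  Finsupp.filter_apply _ _ _

noncomputable def barPart (f : LaurentPolynomial ℤ) : LaurentPolynomial ℤ :=
  nonposPart f + bar (nonposPart f) - C (f.coeff 0)

lemma barInv_barPart (f : LaurentPolynomial ℤ) : BarInv (barPart f) := by
  simp only [BarInv, bar, barPart, map_sub, map_add, invert_C, involutive_invert _]
  ring

lemma inQZq_sub_barPart (f : LaurentPolynomial ℤ) : InQZq (f - barPart f) := by
  intro m hm
  simp only [barPart, bar, AddMonoidAlgebra.coeff_sub, AddMonoidAlgebra.coeff_add,
    Finsupp.sub_apply, Finsupp.add_apply, C_apply, invert_apply, coeff_nonposPart]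
  rcases hm.lt_or_eq with hm | rfl
  · simp [hm.le, hm.ne, hm.not_ge]
  · simp

section LowerTriangular

variable {ι R : Type*} [Fintype ι] [LinearOrder ι] [LocallyFiniteOrder ι]

lemma Matrix.mul_apply_eq_sum_Icc_of_lower [NonUnitalNonAssocSemiring R] {A B : Matrix ι ι R}
    (hA : ∀ i j, i < j → A i j = 0) (hB : ∀ i j, i < j → B i j = 0) (i j : ι) :
    (A * B) i j = ∑ k ∈ Icc j i, A i k * B k j := by
  rw [Matrix.mul_apply]
  refine (sum_subset (subset_univ _) fun k _ hk => ?_).symm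
  rw [mem_Icc, not_and_or, not_le, not_le] at hk
  rcases hk with hk | hk
  · rw [hB k j hk, mul_zero]
  · rw [hA i k hk, zero_mul]

variable {n : ℕ} [Semiring R] {A B : Matrix (Fin n) (Fin n) R}

lemma LowerUni.mul (hA : LowerUni A) (hB : LowerUni B) : LowerUni (A * B) := by
  refine ⟨fun i => ?_, fun i j hij => ?_⟩
  · rw [Matrix.mul_apply_eq_sum_Icc_of_lower hA.2 hB.2, Icc_self, sum_singleton, hA.1, hB.1,
      one_mul]
  · rw [Matrix.mul_apply_eq_sum_Icc_of_lower hA.2 hB.2, Icc_eq_empty_of_lt hij, sum_empty]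

lemma LowerUni.mul_apply_of_lt (hA : LowerUni A) (hB : LowerUni B) {i j : Fin n} (hji : j < i) :
    (A * B) i j = A i j + (B i j + ∑ k ∈ Ioo j i, A i k * B k j) := by
  rw [Matrix.mul_apply_eq_sum_Icc_of_lower hA.2 hB.2, Icc_eq_cons_Ioc hji.le, sum_cons,
    Ioc_eq_cons_Ioo hji, sum_cons, hA.1, hB.1, mul_one, one_mul]

end LowerTriangular

section BarFactor

variable {n : ℕ} (H : Matrix (Fin n) (Fin n) (LaurentPolynomial ℤ))

noncomputable def barFactor : Fin n → Fin n → LaurentPolynomial ℤ × LaurentPolynomial ℤ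
  | i, j =>
    if j < i then
      let r := H i j - ∑ k ∈ (Ioo j i).attach, (barFactor i k.1).1 * (barFactor k.1 j).2
      (r - barPart r, barPart r)
    else if i = j then (1, 1) else (0, 0)
  termination_by i j => (i : ℕ) - j
  decreasing_by
  all_goals
    have hk := mem_Ioo.mp k.2
    have : (j : ℕ) < k.1 := hk.1
    have : (k.1 : ℕ) < i := hk.2
    omega

lemma barFactor_self (i : Fin n) : barFactor H i i = (1, 1) := by
  rw [barFactor]; simp

lemma barFactor_of_lt {i j : Fin n} (hij : i < j) : barFactor H i j = (0, 0) := by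
  rw [barFactor, if_neg (not_lt.2 hij.le), if_neg hij.ne]

lemma barFactor_of_gt {i j : Fin n} (hji : j < i) :
    barFactor H i j =
      let r := H i j - ∑ k ∈ Ioo j i, (barFactor H i k).1 * (barFactor H k j).2
      (r - barPart r, barPart r) := by
  rw [barFactor, if_pos hji, sum_attach (Ioo j i)
    (fun k => (barFactor H i k).1 * (barFactor H k j).2)]

noncomputable def barFactorP : Matrix (Fin n) (Fin n) (LaurentPolynomial ℤ) :=
  Matrix.of fun i j => (barFactor H i j).1

noncomputable def barFactorQ : Matrix (Fin n) (Fin n) (LaurentPolynomial ℤ) :=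
  Matrix.of fun i j => (barFactor H i j).2

lemma lowerUni_barFactorP : LowerUni (barFactorP H) :=
  ⟨fun i => by simp [barFactorP, barFactor_self],
    fun i j hij => by simp [barFactorP, barFactor_of_lt H hij]⟩

lemma lowerUni_barFactorQ : LowerUni (barFactorQ H) :=
  ⟨fun i => by simp [barFactorQ, barFactor_self],
    fun i j hij => by simp [barFactorQ, barFactor_of_lt H hij]⟩

lemma inQZq_barFactorP {i j : Fin n} (hij : i ≠ j) : InQZq (barFactorP H i j) := by
  rcases hij.lt_or_gt with hij | hji
  · simp only [barFactorP, Matrix.of_apply, barFactor_of_lt H hij]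
    exact fun _ _ => rfl
  · simp only [barFactorP, Matrix.of_apply, barFactor_of_gt H hji]
    exact inQZq_sub_barPart _

lemma barInv_barFactorQ (i j : Fin n) : BarInv (barFactorQ H i j) := by
  simp only [BarInv, barFactorQ, Matrix.of_apply]
  rcases lt_trichotomy i j with hij | rfl | hji
  · simp [barFactor_of_lt H hij, bar]
  · simp [barFactor_self, bar]
  · rw [barFactor_of_gt H hji]
    exact barInv_barPart _

lemma barFactorP_mul_barFactorQ (hH : LowerUni H) : barFactorP H * barFactorQ H = H := by
  have hPQ := (lowerUni_barFactorP H).mul (lowerUni_barFactorQ H)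
  refine Matrix.ext fun i j => ?_
  rcases lt_trichotomy i j with hij | rfl | hji
  · rw [hPQ.2 i j hij, hH.2 i j hij]
  · rw [hPQ.1 i, hH.1 i]
  · rw [(lowerUni_barFactorP H).mul_apply_of_lt (lowerUni_barFactorQ H) hji]
    simp only [barFactorP, barFactorQ, Matrix.of_apply, barFactor_of_gt H hji]
    abel

end BarFactor

theorem statement2_general (n : ℕ)
    (H : Matrix (Fin n) (Fin n) (LaurentPolynomial ℤ)) (hH : LowerUni H) :
    ∃ P Q : Matrix (Fin n) (Fin n) (LaurentPolynomial ℤ),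
      LowerUni P ∧ LowerUni Q ∧ H = P * Q ∧
      (∀ i j : Fin n, i ≠ j → InQZq (P i j)) ∧
      (∀ i j : Fin n, BarInv (Q i j)) :=
  ⟨barFactorP H, barFactorQ H, lowerUni_barFactorP H, lowerUni_barFactorQ H,
    (barFactorP_mul_barFactorQ H hH).symm, fun _ _ => inQZq_barFactorP H,
    barInv_barFactorQ H⟩

theorem statement2 (n : ℕ) (hn : 0 < n)
    (H : Matrix (Fin n) (Fin n) (LaurentPolynomial ℤ)) (hH : LowerUni H) :
    ∃ P Q : Matrix (Fin n) (Fin n) (LaurentPolynomial ℤ),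
      LowerUni P ∧ LowerUni Q ∧ H = P * Q ∧
      (∀ i j : Fin n, i ≠ j → InQZq (P i j)) ∧
      (∀ i j : Fin n, BarInv (Q i j)) :=
  statement2_general n H hH
end

section
/- Let σ be an admissible automorphism of a symmetric Cartan datum X = (I, (·,·)), with J the set of σ-orbits, and for each j ∈ J set α_j = Σ_{i∈j} α_i. Then the bilinear form restricted to the span of the α_j satisfies: (α_j, α_j) = (α_i, α_i)·|j| for any i ∈ j, and for j ≠ j', (α_j, α_{j'}) = Σ_{i∈j, i'∈j'} (α_i, α_{i'}). Moreover, (J, (·,·)) is again a Cartan datum, i.e., (α_j,α_j) ∈ 2ℤ_{>0} for all j and 2(α_j,α_{j'})/(α_j,α_j) ∈ ℤ_{≤0} for j ≠ j'. -/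
/-!
Every entry of the folded form is a sum of entries of `B`, and `σ`-invariance of `B` makes the
relevant sums constant along orbits. On the diagonal of an orbit only the terms `(α_i, α_i)`
survive (admissibility kills the rest), and they are all equal, so `(α_j, α_j) = (α_i, α_i)·|j|`,
which is positive and even. Off the diagonal, `(α_j, α_{j'}) = |j| · Σ_{i'∈j'} (α_i, α_{i'})`
for any fixed `i ∈ j`; each summand is nonpositive, and `(α_i, α_i)` divides twice each of them,
so `(α_j, α_j) = (α_i, α_i)·|j|` divides `2 (α_j, α_{j'})`.
-/

open Finset

namespace CartanFolding

variable {I J R : Type*}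

theorem apply_zpow_apply_zpow {B : I → I → R} {σ : Equiv.Perm I}
    (hσB : ∀ i i', B (σ i) (σ i') = B i i') (k : ℤ) (i i' : I) :
    B ((σ ^ k) i) ((σ ^ k) i') = B i i' := by
  induction k using Int.induction_on generalizing i i' with
  | zero => rfl
  | succ n ih => rw [zpow_add_one, Equiv.Perm.mul_apply, Equiv.Perm.mul_apply, ih, hσB]
  | pred n ih =>
    rw [zpow_sub_one, Equiv.Perm.mul_apply, Equiv.Perm.mul_apply, ih, ← hσB]
    simp

variable [Fintype I] [DecidableEq J]

/-- The form on the orbit sums `α_j = Σ_{i ∈ j} α_i`, orbits being the fibres of `π`. -/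
def foldedForm [AddCommMonoid R] (B : I → I → R) (π : I → J) (j j' : J) : R :=
  ∑ i ∈ {i | π i = j}, ∑ i' ∈ {i' | π i' = j'}, B i i'

variable {B : I → I → R} {σ : Equiv.Perm I} {π : I → J}

theorem sum_fiber_eq_of_sameCycle [AddCommMonoid R] (hσB : ∀ i i', B (σ i) (σ i') = B i i')
    (hπ : ∀ i i', π i = π i' ↔ σ.SameCycle i i') {x x' : I} (h : σ.SameCycle x x') (j' : J) :
    ∑ y ∈ {y | π y = j'}, B x y = ∑ y ∈ {y | π y = j'}, B x' y := by
  obtain ⟨k, rfl⟩ := h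
  have hfib (y : I) : π ((σ ^ k) y) = π y := ((hπ y _).mpr ⟨k, rfl⟩).symm
  exact Finset.sum_equiv (σ ^ k) (by simp [hfib]) (fun y _ => (apply_zpow_apply_zpow hσB k x y).symm)

theorem foldedForm_eq_card_mul [Semiring R] (hσB : ∀ i i', B (σ i) (σ i') = B i i')
    (hπ : ∀ i i', π i = π i' ↔ σ.SameCycle i i') {i : I} {j : J} (hi : π i = j) (j' : J) :
    foldedForm B π j j' = #{x | π x = j} * ∑ y ∈ {y | π y = j'}, B i y := by
  rw [foldedForm, ← nsmul_eq_mul, ← sum_const]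
  refine sum_congr rfl fun x hx => sum_fiber_eq_of_sameCycle hσB hπ ?_ j'
  exact (hπ x i).mp ((mem_filter.mp hx).2.trans hi.symm)

theorem foldedForm_self [CommSemiring R] (hσB : ∀ i i', B (σ i) (σ i') = B i i')
    (hadm : ∀ i i', i ≠ i' → σ.SameCycle i i' → B i i' = 0)
    (hπ : ∀ i i', π i = π i' ↔ σ.SameCycle i i') {i : I} {j : J} (hi : π i = j) :
    foldedForm B π j j = B i i * #{x | π x = j} := by
  have hrow : ∑ y ∈ {y | π y = j}, B i y = B i i :=
    sum_eq_single_of_mem i (by simp [hi]) fun y hy hne =>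
      hadm i y hne.symm ((hπ i y).mp (hi.trans (mem_filter.mp hy).2.symm))
  rw [foldedForm_eq_card_mul hσB hπ hi, hrow, mul_comm]

theorem foldedForm_nonpos [AddCommMonoid R] [PartialOrder R] [IsOrderedAddMonoid R]
    (hoff : ∀ i i', i ≠ i' → B i i' ≤ 0) {j j' : J} (hne : j ≠ j') : foldedForm B π j j' ≤ 0 :=
  sum_nonpos fun x hx => sum_nonpos fun y hy => hoff x y fun hxy =>
    hne ((mem_filter.mp hx).2.symm.trans (hxy ▸ (mem_filter.mp hy).2))

theorem foldedForm_self_dvd_two_mul [CommSemiring R] (hσB : ∀ i i', B (σ i) (σ i') = B i i')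
    (hadm : ∀ i i', i ≠ i' → σ.SameCycle i i' → B i i' = 0)
    (hdvd : ∀ i i', i ≠ i' → B i i ∣ 2 * B i i')
    (hπ : ∀ i i', π i = π i' ↔ σ.SameCycle i i') {i : I} {j j' : J} (hi : π i = j)
    (hne : j ≠ j') : foldedForm B π j j ∣ 2 * foldedForm B π j j' := by
  have hrow : B i i ∣ 2 * ∑ y ∈ {y | π y = j'}, B i y := by
    rw [mul_sum]
    refine dvd_sum fun y hy => hdvd i y fun hiy => hne ?_
    rw [← hi, hiy, (mem_filter.mp hy).2]
  rw [foldedForm_self hσB hadm hπ hi, foldedForm_eq_card_mul hσB hπ hi, mul_left_comm, mul_comm]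
  exact mul_dvd_mul_left _ hrow

end CartanFolding

open CartanFolding

theorem statement8_general {I : Type*} [Fintype I]
    (B : I → I → ℤ)
    (hpos : ∀ i, 0 < B i i) (heven : ∀ i, Even (B i i))
    (hoff : ∀ i i', i ≠ i' → B i i' ≤ 0)
    (hdvd : ∀ i i', i ≠ i' → B i i ∣ 2 * B i i')
    (σ : Equiv.Perm I)
    (hσB : ∀ i i', B (σ i) (σ i') = B i i')
    (hadm : ∀ i i', i ≠ i' → (∃ k : ℤ, (σ ^ k) i = i') → B i i' = 0)
    (J : Type*) [DecidableEq J] (π : I → J)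
    (hπsurj : Function.Surjective π)
    (hπ : ∀ i i', π i = π i' ↔ ∃ k : ℤ, (σ ^ k) i = i') :
    letI BJ : J → J → ℤ := fun j j' =>
      ∑ i ∈ univ.filter (fun i => π i = j), ∑ i' ∈ univ.filter (fun i' => π i' = j'), B i i'
    (∀ (j : J) (i : I), π i = j →
      BJ j j = B i i * ((univ.filter (fun i' => π i' = j)).card : ℤ)) ∧
    (∀ j j' : J, j ≠ j' →
      BJ j j' = ∑ i ∈ univ.filter (fun i => π i = j),
        ∑ i' ∈ univ.filter (fun i' => π i' = j'), B i i') ∧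
    (∀ j : J, 0 < BJ j j ∧ Even (BJ j j)) ∧
    (∀ j j' : J, j ≠ j' → BJ j j' ≤ 0 ∧ BJ j j ∣ 2 * BJ j j') := by
  have hself (j : J) (i : I) (hi : π i = j) := foldedForm_self hσB hadm hπ hi
  refine ⟨hself, fun _ _ _ => rfl, fun j => ?_, fun j j' hne => ?_⟩
  · obtain ⟨i, rfl⟩ := hπsurj j
    have hcard : 0 < (#{x | π x = π i} : ℤ) := by exact_mod_cast card_pos.mpr ⟨i, by simp⟩
    show 0 < foldedForm B π (π i) (π i) ∧ Even (foldedForm B π (π i) (π i))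
    rw [hself _ i rfl]
    exact ⟨mul_pos (hpos i) hcard, (heven i).mul_right _⟩
  · obtain ⟨i, rfl⟩ := hπsurj j
    exact ⟨foldedForm_nonpos hoff hne, foldedForm_self_dvd_two_mul hσB hadm hdvd hπ rfl hne⟩

/-- Folding a symmetric Cartan datum along an admissible automorphism yields a Cartan datum,
with `(α_j, α_j) = (α_i, α_i)·|j|` and `(α_j, α_{j'}) = Σ_{i∈j, i'∈j'} (α_i, α_{i'})`. -/
theorem statement8 {I : Type*} [Fintype I] [DecidableEq I]
    (B : I → I → ℤ)
    (hsymmB : ∀ i i', B i i' = B i' i)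
    (hpos : ∀ i, 0 < B i i) (heven : ∀ i, Even (B i i))
    (hoff : ∀ i i', i ≠ i' → B i i' ≤ 0)
    (hdvd : ∀ i i', i ≠ i' → B i i ∣ 2 * B i i')
    (hcartanSymm : ∀ i i', 2 * B i i' * B i' i' = 2 * B i' i * B i i)
    (σ : Equiv.Perm I)
    (hσB : ∀ i i', B (σ i) (σ i') = B i i')
    (hadm : ∀ i i', i ≠ i' → (∃ k : ℤ, (σ ^ k) i = i') → B i i' = 0)
    (J : Type*) [Fintype J] [DecidableEq J] (π : I → J)
    (hπsurj : Function.Surjective π)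
    (hπ : ∀ i i', π i = π i' ↔ ∃ k : ℤ, (σ ^ k) i = i') :
    letI BJ : J → J → ℤ := fun j j' =>
      ∑ i ∈ univ.filter (fun i => π i = j), ∑ i' ∈ univ.filter (fun i' => π i' = j'), B i i'
    (∀ (j : J) (i : I), π i = j →
      BJ j j = B i i * ((univ.filter (fun i' => π i' = j)).card : ℤ)) ∧
    (∀ j j' : J, j ≠ j' →
      BJ j j' = ∑ i ∈ univ.filter (fun i => π i = j),
        ∑ i' ∈ univ.filter (fun i' => π i' = j'), B i i') ∧
    (∀ j : J, 0 < BJ j j ∧ Even (BJ j j)) ∧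
    (∀ j j' : J, j ≠ j' → BJ j j' ≤ 0 ∧ BJ j j ∣ 2 * BJ j j') :=
  statement8_general B hpos heven hoff hdvd σ hσB hadm J π hπsurj hπ
end
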